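/- Let (X,T) be a minimal topological dynamical system and p ≥ 2 an integer. The following are equivalent: (1) λ = exp(2iπ/p) is an eigenvalue of (X,T); (2) p is an essential period of some point of X for some clopen set U (i.e. p ∈ ℙ(X,T)); (3) there exists a closed subset V ⊆ X such that the sets V, T^{-1}V, …, T^{-p+1}V are pairwise disjoint and their union is X; (4) there is a factor map from (X,T) onto the cyclic system (ℤ/pℤ, R), where R is addition of 1 modulo p. -/

import Mathlib

/-- The period-`p` skeleton of `x` relative to `U`:
`PS_p(x,U) = {k ∈ ℤ : T^{k+np} x ∈ U for all n ∈ ℤ}`. -/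
def periodSkeleton {X : Type*} (T : X ≃ X) (p : ℕ) (x : X) (U : Set X) : Set ℤ :=
  {k : ℤ | ∀ n : ℤ, (T ^ (k + n * p)) x ∈ U}

/-- `p` is an essential period of `x` for `U`: the skeleton is nonempty and `p`
divides every `q` with `PS_p(x,U) = PS_p(x,U) − q`. -/
def IsEssentialPeriod {X : Type*} (T : X ≃ X) (p : ℕ) (x : X) (U : Set X) : Prop :=
  periodSkeleton T p x U ≠ ∅ ∧
    ∀ q : ℤ, periodSkeleton T p x U = (fun k => k - q) '' periodSkeleton T p x U →
      (p : ℤ) ∣ q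

/-!
Everything is compared with (4), a locally constant map `F : X → ZMod p` with
`F (T y) = F y + 1`. To construct such an `F` it suffices to find an equivariant map with closed
fibers: finitely many closed fibers partitioning `X` are clopen, and equivariance gives
surjectivity.

From an eigenfunction `f`, minimality makes `f ^ p` constant, so `f / f x₀` takes values in the
`p`-th roots of unity, which the standard character of `ZMod p` parametrizes. From a closed set
`V` whose first `p` preimages partition `X`, the exponents `k` with `T^k y ∈ V` meet every
window of `p` consecutive integers exactly once, hence form one residue class mod `p`. From an
essential period, the skeleton of any point read modulo `p` is, by minimality and closedness of
`U`, a translate of the skeleton of `x`, and the translation is unique because essentiality says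
that the skeleton of `x` has trivial stabilizer. Conversely, the character composed with `F` is
an eigenfunction, and `F⁻¹' {0}` is both the clopen set and the closed set `V`.
-/

open Function Set

theorem mem_iff_modEq_of_window {p : ℕ} {I : Set ℤ}
    (hex : ∀ m : ℤ, ∃ i < p, m + i ∈ I) (huniq : ∀ m ∈ I, ∀ i < p, m + i ∈ I → i = 0)
    {k : ℤ} (hk : k ∈ I) (l : ℤ) : l ∈ I ↔ k ≡ l [ZMOD p] := by
  have hp : (0 : ℤ) < p := by
    obtain ⟨i, hi, -⟩ := hex 0
    omega
  have add_period_mem : ∀ j ∈ I, j + p ∈ I := by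
    intro j hj
    obtain ⟨i, hi, hji⟩ := hex (j + 1)
    obtain rfl : i + 1 = p := by
      by_contra hne
      have := huniq j hj (i + 1) (by omega) (by push_cast; rwa [← add_assoc, add_right_comm])
      omega
    convert hji using 1
    push_cast
    ring
  have sub_period_mem : ∀ j ∈ I, j - p ∈ I := by
    intro j hj
    obtain ⟨i, hi, hji⟩ := hex (j - p)
    obtain rfl : i = 0 := huniq j hj i hi (by convert add_period_mem _ hji using 1; ring)
    simpa using hji
  have shift_mem : ∀ j ∈ I, ∀ n : ℤ, j + n * p ∈ I := by
    intro j hj n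
    induction n using Int.induction_on with
    | zero => simpa using hj
    | succ n ih => simpa [add_mul, add_assoc] using add_period_mem _ ih
    | pred n ih => simpa [sub_mul, add_sub_assoc] using sub_period_mem _ ih
  rw [Int.modEq_iff_dvd]
  constructor
  · intro hl
    obtain ⟨r, hr⟩ := Int.eq_ofNat_of_zero_le (Int.emod_nonneg (l - k) hp.ne')
    have hr_mem : k + r ∈ I := by
      convert shift_mem l hl (-((l - k) / p)) using 1
      rw [← hr, Int.emod_def]
      ring
    have hr_lt : r < p := by have := Int.emod_lt_of_pos (l - k) hp; omega
    rw [Int.dvd_iff_emod_eq_zero, hr, huniq k hk r hr_lt hr_mem, Nat.cast_zero]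
  · rintro ⟨n, hn⟩
    convert shift_mem k hk n using 1
    linarith

section Perm

variable {X : Type*} (σ : Equiv.Perm X)

theorem apply_zpow_of_apply_eq_add {G : Type*} [AddCommGroup G] {F : X → G} {c : G}
    (h : ∀ y, F (σ y) = F y + c) (n : ℤ) (y : X) : F ((σ ^ n) y) = F y + n • c := by
  induction n using Int.induction_on generalizing y with
  | zero => simp
  | succ n ih =>
    rw [zpow_add_one, Equiv.Perm.mul_apply, ih, h, add_zsmul, one_zsmul, add_right_comm, add_assoc]
  | pred n ih =>
    have hinv : F (σ⁻¹ y) = F y - c := eq_sub_of_add_eq (by simpa using (h (σ⁻¹ y)).symm)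
    rw [zpow_sub_one, Equiv.Perm.mul_apply, ih, hinv, sub_zsmul, one_zsmul]
    abel

theorem surjective_of_apply_eq_add_one [Nonempty X] {p : ℕ} {F : X → ZMod p}
    (h : ∀ y, F (σ y) = F y + 1) : Surjective F := by
  intro a
  obtain ⟨y⟩ := ‹Nonempty X›
  refine ⟨(σ ^ (ZMod.cast (a - F y) : ℤ)) y, ?_⟩
  rw [apply_zpow_of_apply_eq_add σ h, zsmul_one, ZMod.intCast_zmod_cast, add_sub_cancel]

variable {p : ℕ}

theorem zpow_mem_iff_modEq {V : Set X}
    (hdisj : ∀ i j : Fin p, i ≠ j →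
      Disjoint ((fun x => (σ ^ (i : ℤ)) x) ⁻¹' V) ((fun x => (σ ^ (j : ℤ)) x) ⁻¹' V))
    (hcov : (⋃ i : Fin p, (fun x => (σ ^ (i : ℤ)) x) ⁻¹' V) = univ)
    {y : X} {k : ℤ} (hk : (σ ^ k) y ∈ V) (l : ℤ) : (σ ^ l) y ∈ V ↔ k ≡ l [ZMOD p] := by
  have hshift : ∀ (m : ℤ) (i : ℕ), (σ ^ (i : ℤ)) ((σ ^ m) y) = (σ ^ (m + i)) y := by
    intro m i
    rw [add_comm, zpow_add, Equiv.Perm.mul_apply]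
  refine mem_iff_modEq_of_window (I := {k | (σ ^ k) y ∈ V}) (fun m => ?_) ?_ hk l
  · obtain ⟨i, hi⟩ := mem_iUnion.mp (hcov ▸ mem_univ ((σ ^ m) y))
    rw [mem_preimage, hshift] at hi
    exact ⟨i, i.isLt, hi⟩
  · intro m hm i hi hmi
    by_contra hne
    exact disjoint_left.mp (hdisj ⟨0, by omega⟩ ⟨i, hi⟩ (by simp [Fin.ext_iff, Ne.symm hne]))
      (show (σ ^ m) y ∈ _ by simpa [hshift] using hm) (by rwa [mem_preimage, Fin.val_mk, hshift])

end Perm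

section Topology

variable {X : Type*} [TopologicalSpace X]

theorem isLocallyConstant_of_isClosed_fiber {Y : Type*} [Finite Y] {f : X → Y}
    (h : ∀ y, IsClosed (f ⁻¹' {y})) : IsLocallyConstant f := by
  refine IsLocallyConstant.iff_isOpen_fiber.mpr fun y => ?_
  rw [← isClosed_compl_iff, ← preimage_compl, ← biUnion_preimage_singleton]
  exact (toFinite _).isClosed_biUnion fun b _ => h b

theorem continuous_toEquiv_zpow (T : X ≃ₜ X) (n : ℤ) : Continuous ⇑(T.toEquiv ^ n) := by
  have hpow : (T ^ n).toEquiv = T.toEquiv ^ n :=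
    map_zpow ({ toFun := Homeomorph.toEquiv, map_one' := rfl, map_mul' := fun _ _ => rfl } :
      (X ≃ₜ X) →* Equiv.Perm X) T n
  exact hpow ▸ (T ^ n).continuous

theorem DenseRange.exists_mem_closure_image_preimage {ι κ : Type*} [Finite κ] {g : ι → X}
    (hg : DenseRange g) (c : ι → κ) (z : X) : ∃ r, z ∈ closure (g '' (c ⁻¹' {r})) := by
  have hcover : range g ⊆ ⋃ r, g '' (c ⁻¹' {r}) := by
    rintro _ ⟨i, rfl⟩
    exact mem_iUnion.mpr ⟨c i, mem_image_of_mem g rfl⟩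
  have hz := closure_mono hcover (hg.closure_range ▸ mem_univ z)
  rwa [closure_iUnion_of_finite, mem_iUnion] at hz

end Topology

section Skeleton

variable {X : Type*} {p : ℕ}

def periodSkeletonMod (σ : Equiv.Perm X) (p : ℕ) (x : X) (U : Set X) : Set (ZMod p) :=
  {a | ∀ k : ℤ, (k : ZMod p) = a → (σ ^ k) x ∈ U}

variable {σ : Equiv.Perm X} {x : X} {U : Set X}

theorem intCast_mem_periodSkeletonMod {k : ℤ} :
    (k : ZMod p) ∈ periodSkeletonMod σ p x U ↔ k ∈ periodSkeleton σ p x U := by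
  refine ⟨fun h n => h _ (by simp), fun h j hj => ?_⟩
  obtain ⟨n, hn⟩ := (ZMod.intCast_eq_intCast_iff_dvd_sub k j p).mp hj.symm
  simpa [show k + n * p = j by linarith] using h n

theorem mem_periodSkeletonMod_zpow_apply {a : ZMod p} (m : ℤ) :
    a ∈ periodSkeletonMod σ p ((σ ^ m) x) U ↔ a + m ∈ periodSkeletonMod σ p x U := by
  simp only [periodSkeletonMod, mem_ofPred_eq, ← Equiv.Perm.mul_apply, ← zpow_add]
  refine ⟨fun h k hk => ?_, fun h k hk => h (k + m) (by push_cast; rw [hk])⟩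
  simpa using h (k - m) (by push_cast; rw [hk, add_sub_cancel_right])

theorem mem_periodSkeletonMod_apply {a : ZMod p} :
    a ∈ periodSkeletonMod σ p (σ x) U ↔ a + 1 ∈ periodSkeletonMod σ p x U := by
  simpa using mem_periodSkeletonMod_zpow_apply (σ := σ) (x := x) (U := U) (a := a) 1

theorem isClosed_setOf_mem_periodSkeletonMod [TopologicalSpace X] (T : X ≃ₜ X) (hU : IsClosed U)
    (a : ZMod p) : IsClosed {x | a ∈ periodSkeletonMod T.toEquiv p x U} := by
  have hset : {x | a ∈ periodSkeletonMod T.toEquiv p x U} =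
      ⋂ (k : ℤ) (_ : (k : ZMod p) = a), ⇑(T.toEquiv ^ k) ⁻¹' U := by
    ext
    simp [periodSkeletonMod]
  rw [hset]
  exact isClosed_iInter fun k => isClosed_iInter fun _ =>
    hU.preimage (continuous_toEquiv_zpow T k)

theorem add_mem_iff_of_forall_add_mem {G : Type*} [AddGroup G] [Finite G] {s : Set G} {e : G}
    (h : ∀ a ∈ s, a + e ∈ s) (a : G) : a + e ∈ s ↔ a ∈ s := by
  have hbij := ((toFinite s).injOn_iff_bijOn_of_mapsTo h).mp (add_left_injective e).injOn
  refine ⟨fun ha => ?_, h a⟩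
  obtain ⟨b, hb, hba⟩ := hbij.surjOn ha
  rwa [← add_right_cancel hba]

theorem IsEssentialPeriod.eq_zero_of_forall_add_mem [NeZero p] (hess : IsEssentialPeriod σ p x U)
    {e : ZMod p} (he : ∀ a ∈ periodSkeletonMod σ p x U, a + e ∈ periodSkeletonMod σ p x U) :
    e = 0 := by
  have hshift : periodSkeleton σ p x U =
      (fun k => k - (ZMod.cast e : ℤ)) '' periodSkeleton σ p x U := by
    ext k
    simp only [mem_image, ← intCast_mem_periodSkeletonMod]
    constructor
    · intro hk
      refine ⟨k + ZMod.cast e, ?_, add_sub_cancel_right _ _⟩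
      simpa using he _ hk
    · rintro ⟨j, hj, rfl⟩
      rw [← add_mem_iff_of_forall_add_mem he]
      simpa using hj
  rw [← ZMod.intCast_zmod_cast e, ZMod.intCast_zmod_eq_zero_iff_dvd]
  exact hess.2 _ hshift

theorem IsEssentialPeriod.eq_of_forall_add_mem_imp [NeZero p] (hess : IsEssentialPeriod σ p x U)
    {r s : ZMod p}
    (h : ∀ a, a + r ∈ periodSkeletonMod σ p x U → a + s ∈ periodSkeletonMod σ p x U) : r = s := by
  refine (sub_eq_zero.mp (hess.eq_zero_of_forall_add_mem fun b hb => ?_)).symm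
  have := h (b - r) (by rwa [sub_add_cancel])
  rwa [sub_add_comm, add_comm] at this

end Skeleton

section Factor

variable {X : Type*} [TopologicalSpace X] {p : ℕ}

theorem stdAddChar_one [NeZero p] :
    ZMod.stdAddChar (1 : ZMod p) = Complex.exp (2 * Real.pi * Complex.I / p) := by
  simpa using ZMod.stdAddChar_coe (N := p) 1

theorem exists_stdAddChar_eq [NeZero p] {w : ℂ} (hw : w ^ p = 1) :
    ∃ a : ZMod p, ZMod.stdAddChar a = w := by
  obtain ⟨i, -, hi⟩ := (Complex.isPrimitiveRoot_exp p (NeZero.ne p)).eq_pow_of_pow_eq_one hw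
  rw [← stdAddChar_one, ← AddChar.map_nsmul_eq_pow, nsmul_one] at hi
  exact ⟨i, hi⟩

theorem exists_eigenfunction_of_factor [Nonempty X] [NeZero p] {φ : X → X} {F : X → ZMod p}
    (hF : IsLocallyConstant F) (hFφ : ∀ y, F (φ y) = F y + 1) :
    ∃ f : C(X, ℂ), f ≠ 0 ∧
      ∀ y, f (φ y) = Complex.exp (2 * Real.pi * Complex.I / p) * f y := by
  refine ⟨⟨fun y => ZMod.stdAddChar (F y), (hF.comp _).continuous⟩, fun h => ?_, fun y => ?_⟩
  · obtain ⟨y⟩ := ‹Nonempty X›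
    exact Circle.coe_ne_zero _ (DFunLike.congr_fun h y)
  · simp [hFφ, AddChar.map_add_eq_mul, stdAddChar_one, mul_comm]

variable (σ : Equiv.Perm X)

theorem exists_isEssentialPeriod_of_factor [NeZero p] {F : X → ZMod p} (hF : IsLocallyConstant F)
    (hsurj : Surjective F) (hFσ : ∀ y, F (σ y) = F y + 1) :
    ∃ (x : X) (U : Set X), IsClopen U ∧ IsEssentialPeriod σ p x U := by
  obtain ⟨x, hx⟩ := hsurj 0
  have hskel : ∀ k, k ∈ periodSkeleton σ p x (F ⁻¹' {0}) ↔ (p : ℤ) ∣ k := by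
    intro k
    simp [periodSkeleton, apply_zpow_of_apply_eq_add σ hFσ, hx, ZMod.intCast_zmod_eq_zero_iff_dvd]
  have hzero := (hskel 0).mpr (dvd_zero _)
  refine ⟨x, F ⁻¹' {0}, hF.isClopen_fiber 0, (nonempty_of_mem hzero).ne_empty, fun q hq => ?_⟩
  obtain ⟨k, hk, hkq⟩ := hq ▸ hzero
  rwa [← hskel, ← sub_eq_zero.mp hkq]

theorem exists_partition_of_factor [NeZero p] {F : X → ZMod p} (hF : IsLocallyConstant F)
    (hFσ : ∀ y, F (σ y) = F y + 1) :
    ∃ V : Set X, IsClosed V ∧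
      (∀ i j : Fin p, i ≠ j →
        Disjoint ((fun x => (σ ^ (i : ℤ)) x) ⁻¹' V) ((fun x => (σ ^ (j : ℤ)) x) ⁻¹' V)) ∧
      (⋃ i : Fin p, (fun x => (σ ^ (i : ℤ)) x) ⁻¹' V) = univ := by
  have hpow (i : ℕ) (y : X) : F ((σ ^ (i : ℤ)) y) = F y + i := by
    simpa using apply_zpow_of_apply_eq_add σ hFσ i y
  refine ⟨F ⁻¹' {0}, hF.isClosed_fiber 0, fun i j hij => disjoint_left.mpr fun y hi hj => ?_, ?_⟩
  · simp only [mem_preimage, mem_singleton_iff, hpow] at hi hj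
    have hval := congrArg ZMod.val (add_left_cancel (hi.trans hj.symm))
    rw [ZMod.val_cast_of_lt i.isLt, ZMod.val_cast_of_lt j.isLt] at hval
    exact hij (Fin.ext hval)
  · refine eq_univ_of_forall fun y => mem_iUnion.mpr ⟨⟨(-F y).val, ZMod.val_lt _⟩, ?_⟩
    simp only [mem_preimage, mem_singleton_iff, hpow, ZMod.natCast_zmod_val, add_neg_cancel]

end Factor

section Minimal

variable {X : Type*} [TopologicalSpace X] {p : ℕ} [NeZero p] (T : X ≃ₜ X)

theorem exists_factor_of_eigenfunction
    (hmin : ∀ x : X, Dense (range fun n : ℤ => (T.toEquiv ^ n) x))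
    {f : C(X, ℂ)} (hf0 : f ≠ 0)
    (hf : ∀ y, f (T y) = Complex.exp (2 * Real.pi * Complex.I / p) * f y) :
    ∃ F : X → ZMod p, IsLocallyConstant F ∧ Surjective F ∧ ∀ y, F (T y) = F y + 1 := by
  obtain ⟨x₀, hx₀⟩ : ∃ x₀, f x₀ ≠ 0 := by simpa using DFunLike.ne_iff.mp hf0
  have hconst : ∀ y, f y ^ p = f x₀ ^ p := congrFun <|
    DenseRange.equalizer (hmin x₀) (f.continuous.pow p) continuous_const <| funext fun n => by
      simpa using apply_zpow_of_apply_eq_add T.toEquiv (F := (f · ^ p)) (c := 0)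
        (by simp [hf, mul_pow, (Complex.isPrimitiveRoot_exp p (NeZero.ne p)).pow_eq_one]) n x₀
  choose F hF using fun y => exists_stdAddChar_eq (w := f y / f x₀) <| by
    rw [div_pow, hconst, div_self (pow_ne_zero p hx₀)]
  have hfiber (a : ZMod p) : F ⁻¹' {a} = (fun y => f y / f x₀) ⁻¹' {ZMod.stdAddChar a} := by
    ext y
    simp [← hF y, ZMod.injective_stdAddChar.eq_iff]
  have hFT (y : X) : F (T y) = F y + 1 := ZMod.injective_stdAddChar <| by
    rw [hF, AddChar.map_add_eq_mul, hF, stdAddChar_one, hf, mul_div_assoc, mul_comm]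
  have : Nonempty X := ⟨x₀⟩
  refine ⟨F, isLocallyConstant_of_isClosed_fiber fun a => ?_,
    surjective_of_apply_eq_add_one T.toEquiv hFT, hFT⟩
  rw [hfiber]
  exact isClosed_singleton.preimage (f.continuous.div_const _)

theorem exists_forall_add_mem_imp {y : X}
    (hy : Dense (range fun n : ℤ => (T.toEquiv ^ n) y)) {U : Set X} (hU : IsClosed U) (z : X) :
    ∃ r : ZMod p, ∀ a, a + r ∈ periodSkeletonMod T.toEquiv p y U →
      a ∈ periodSkeletonMod T.toEquiv p z U := by
  obtain ⟨r, hr⟩ := DenseRange.exists_mem_closure_image_preimage hy (fun m : ℤ => (m : ZMod p)) z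
  refine ⟨r, fun a ha => closure_minimal ?_ (isClosed_setOf_mem_periodSkeletonMod T hU a) hr⟩
  rintro _ ⟨m, rfl, rfl⟩
  exact (mem_periodSkeletonMod_zpow_apply m).mpr ha

theorem IsEssentialPeriod.exists_factor
    (hmin : ∀ x : X, Dense (range fun n : ℤ => (T.toEquiv ^ n) x))
    {x : X} {U : Set X} (hU : IsClosed U) (hess : IsEssentialPeriod T.toEquiv p x U) :
    ∃ F : X → ZMod p, IsLocallyConstant F ∧ Surjective F ∧ ∀ y, F (T y) = F y + 1 := by
  set S := fun y => periodSkeletonMod T.toEquiv p y U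
  have htranslate (z : X) : ∃! r, ∀ a, a + r ∈ S x → a ∈ S z := by
    obtain ⟨r, hr⟩ := exists_forall_add_mem_imp (p := p) T (hmin x) hU z
    obtain ⟨r', hr'⟩ := exists_forall_add_mem_imp (p := p) T (hmin z) hU x
    have hback (s : ZMod p) (hs : ∀ a, a + s ∈ S x → a ∈ S z) : s = -r' :=
      hess.eq_of_forall_add_mem_imp fun b hb => hr' _ (by rw [neg_add_cancel_right]; exact hs b hb)
    exact ⟨r, hr, fun s hs => (hback s hs).trans (hback r hr).symm⟩
  choose F hF huniq using htranslate
  have hfiber (z : X) (r : ZMod p) : F z = r ↔ ∀ a, a + r ∈ S x → a ∈ S z :=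
    ⟨fun h => h ▸ hF z, fun h => (huniq z r h).symm⟩
  have hFT (z : X) : F (T z) = F z + 1 := (hfiber _ _).mpr fun a ha =>
    mem_periodSkeletonMod_apply.mpr (hF z _ (by rwa [add_right_comm, add_assoc]))
  have : Nonempty X := ⟨x⟩
  refine ⟨F, isLocallyConstant_of_isClosed_fiber fun r => ?_,
    surjective_of_apply_eq_add_one T.toEquiv hFT, hFT⟩
  have hset : F ⁻¹' {r} = ⋂ (a) (_ : a + r ∈ S x), {z | a ∈ S z} := by
    ext z
    simp [hfiber]
  rw [hset]
  exact isClosed_biInter fun a _ => isClosed_setOf_mem_periodSkeletonMod T hU a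

theorem exists_factor_of_partition [Nonempty X] {V : Set X} (hV : IsClosed V)
    (hdisj : ∀ i j : Fin p, i ≠ j →
      Disjoint ((fun x => (T.toEquiv ^ (i : ℤ)) x) ⁻¹' V)
        ((fun x => (T.toEquiv ^ (j : ℤ)) x) ⁻¹' V))
    (hcov : (⋃ i : Fin p, (fun x => (T.toEquiv ^ (i : ℤ)) x) ⁻¹' V) = univ) :
    ∃ F : X → ZMod p, IsLocallyConstant F ∧ Surjective F ∧ ∀ y, F (T y) = F y + 1 := by
  have hhit (y : X) : ∃ k : ℤ, (T.toEquiv ^ k) y ∈ V := by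
    obtain ⟨i, hi⟩ := mem_iUnion.mp (hcov ▸ mem_univ y)
    exact ⟨i, hi⟩
  choose e he using hhit
  have hmem (y : X) (l : ℤ) : (T.toEquiv ^ l) y ∈ V ↔ (e y : ZMod p) = l :=
    (zpow_mem_iff_modEq T.toEquiv hdisj hcov (he y) l).trans
      (ZMod.intCast_eq_intCast_iff _ _ _).symm
  have hFT (y : X) : -(e (T y) : ZMod p) = -(e y : ZMod p) + 1 := by
    have h := (hmem y (e (T y) + 1)).mp (by rw [zpow_add_one, Equiv.Perm.mul_apply]; exact he _)
    rw [h]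
    push_cast
    ring
  refine ⟨fun y => -(e y : ZMod p), isLocallyConstant_of_isClosed_fiber fun a => ?_,
    surjective_of_apply_eq_add_one T.toEquiv hFT, hFT⟩
  have hset : (fun y => -(e y : ZMod p)) ⁻¹' {a} = ⇑(T.toEquiv ^ (ZMod.cast (-a) : ℤ)) ⁻¹' V := by
    ext y
    simp [hmem, neg_eq_iff_eq_neg]
  rw [hset]
  exact hV.preimage (continuous_toEquiv_zpow T _)

end Minimal

theorem eigenvalue_tfae_general
    {X : Type*} [MetricSpace X] [Nonempty X]
    (T : X ≃ₜ X)
    (hmin : ∀ x : X, Dense (Set.range fun n : ℤ => (T.toEquiv ^ n) x))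
    (p : ℕ) (hp : 2 ≤ p) :
    List.TFAE
      [ ∃ f : C(X, ℂ), f ≠ 0 ∧
          ∀ x : X, f (T x) = Complex.exp (2 * Real.pi * Complex.I / p) * f x,
        ∃ (x : X) (U : Set X), IsClopen U ∧ IsEssentialPeriod T.toEquiv p x U,
        ∃ V : Set X, IsClosed V ∧
          (∀ i j : Fin p, i ≠ j →
            Disjoint ((fun x => (T.toEquiv ^ (i : ℤ)) x) ⁻¹' V)
              ((fun x => (T.toEquiv ^ (j : ℤ)) x) ⁻¹' V)) ∧
          (⋃ i : Fin p, (fun x => (T.toEquiv ^ (i : ℤ)) x) ⁻¹' V) = Set.univ,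
        ∃ f : X → ZMod p, (∀ s : Set (ZMod p), IsOpen (f ⁻¹' s)) ∧
          Function.Surjective f ∧ ∀ x : X, f (T x) = f x + 1 ] := by
  have : NeZero p := ⟨by omega⟩
  tfae_have 1 → 4 := fun ⟨f, hf0, hf⟩ => exists_factor_of_eigenfunction T hmin hf0 hf
  tfae_have 2 → 4 := fun ⟨_, _, hU, hess⟩ => hess.exists_factor T hmin hU.isClosed
  tfae_have 3 → 4 := fun ⟨_, hV, hdisj, hcov⟩ => exists_factor_of_partition T hV hdisj hcov
  tfae_have 4 → 1 := fun ⟨_, hF, _, hFT⟩ => exists_eigenfunction_of_factor hF hFT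
  tfae_have 4 → 2 := fun ⟨_, hF, hsurj, hFT⟩ =>
    exists_isEssentialPeriod_of_factor T.toEquiv hF hsurj hFT
  tfae_have 4 → 3 := fun ⟨_, hF, _, hFT⟩ => exists_partition_of_factor T.toEquiv hF hFT
  tfae_finish

/-- Let `(X,T)` be a minimal topological dynamical system and `p ≥ 2`. TFAE:
(1) `exp(2iπ/p)` is an eigenvalue of `(X,T)`;
(2) `p` is an essential period of some point for some clopen set (`p ∈ ℙ(X,T)`);
(3) there is a closed `V ⊆ X` with `V, T⁻¹V, …, T^{-p+1}V` pairwise disjoint covering `X`;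
(4) there is a factor map from `(X,T)` onto `(ℤ/pℤ, +1)`. -/
theorem eigenvalue_tfae
    {X : Type*} [MetricSpace X] [CompactSpace X] [Nonempty X]
    (T : X ≃ₜ X)
    (hmin : ∀ x : X, Dense (Set.range fun n : ℤ => (T.toEquiv ^ n) x))
    (p : ℕ) (hp : 2 ≤ p) :
    List.TFAE
      [ ∃ f : C(X, ℂ), f ≠ 0 ∧
          ∀ x : X, f (T x) = Complex.exp (2 * Real.pi * Complex.I / p) * f x,
        ∃ (x : X) (U : Set X), IsClopen U ∧ IsEssentialPeriod T.toEquiv p x U,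
        ∃ V : Set X, IsClosed V ∧
          (∀ i j : Fin p, i ≠ j →
            Disjoint ((fun x => (T.toEquiv ^ (i : ℤ)) x) ⁻¹' V)
              ((fun x => (T.toEquiv ^ (j : ℤ)) x) ⁻¹' V)) ∧
          (⋃ i : Fin p, (fun x => (T.toEquiv ^ (i : ℤ)) x) ⁻¹' V) = Set.univ,
        ∃ f : X → ZMod p, (∀ s : Set (ZMod p), IsOpen (f ⁻¹' s)) ∧
          Function.Surjective f ∧ ∀ x : X, f (T x) = f x + 1 ] :=
  eigenvalue_tfae_general T hmin p hp
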